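/- arXiv:1306.2598 — 5 statements merged into one kernel-verified Lean document; each statement's English description precedes it below -/
import Mathlib

section
/- Let F be a field of characteristic 2 and let A ∈ Mₙ(F) be a matrix such that Aᵗ = A and A² = c·Iₙ for some scalar c ∈ F. Then c is a square in F, i.e. c = d² for some d ∈ F. -/
theorem symm_matrix_sq_scalar_is_square_char_two
    (F : Type) [Field F] (hF : ringChar F = 2)
    (n : ℕ) (hn : 0 < n)
    (A : Matrix (Fin n) (Fin n) F) (hsymm : A.transpose = A)
    (c : F) (hsq : A * A = c • (1 : Matrix (Fin n) (Fin n) F)) :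
    ∃ d : F, c = d ^ 2 := by
  haveI : CharP F 2 := hF ▸ ringChar.charP F
  haveI : Fact (Nat.Prime 2) := ⟨Nat.prime_two⟩
  set i : Fin n := ⟨0, hn⟩
  refine ⟨∑ j, A i j, ?_⟩
  have h := congrFun (congrFun hsq i) i
  rw [Matrix.mul_apply, Matrix.smul_apply, Matrix.one_apply_eq, smul_eq_mul, mul_one] at h
  rw [← h, sum_pow_char]
  refine Finset.sum_congr rfl fun j _ => ?_
  rw [sq]
  congr 1
  have := congrFun (congrFun hsymm i) j
  simpa [Matrix.transpose_apply] using this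
end

section
/- Let (V,q) be a 4-dimensional quadratic space over a field F of characteristic 2 and let τ ∈ O(V,q) be an involution. Then dim_F fix(V,τ) = 2 if and only if either τ is an interchange isometry, or there is an orthogonal decomposition V = E₁ ⊥ E₂ into 2-dimensional τ-invariant subspaces such that τ|_{E₁} and τ|_{E₂} are reflections. -/
open Module QuadraticMap

section Aux

variable {F : Type} [Field F] {V : Type} [AddCommGroup V] [Module F V]

lemma aux_polar_eq (q : QuadraticForm F V) (τ : V →ₗ[F] V) (hτq : ∀ v, q (τ v) = q v)
    {u w : V} (hw : τ w = w + u) : polar q u w = - q u := by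
  have h : q (u + w) = q w := by rw [add_comm, ← hw, hτq]
  show q (u + w) - q u - q w = - q u
  rw [h]; ring

lemma aux_pack (h1 : (-1 : F) = 1) (q : QuadraticForm F V) (τ : V →ₗ[F] V)
    (hτq : ∀ v, q (τ v) = q v) {u w : V} (hu : τ u = u) (hw : τ w = w + u) (hqu : q u ≠ 0) :
    finrank F (Submodule.span F ({u, w} : Set V)) = 2 ∧
    (∀ x ∈ Submodule.span F ({u, w} : Set V), τ x ∈ Submodule.span F ({u, w} : Set V)) ∧
    ∀ v ∈ Submodule.span F ({u, w} : Set V), τ v = v + (polar q v u / q u) • u := by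
  have hneg : ∀ a : F, -a = a := fun a => by rw [← neg_one_mul, h1, one_mul]
  have h2 : (2 : F) = 0 := by linear_combination -h1
  have hps : ∀ x : V, polar q x x = 0 := fun x => by
    rw [polar_self, two_smul, ← two_mul, h2, zero_mul]
  have hpuw : polar q u w = - q u := aux_polar_eq q τ hτq hw
  have hpwu : polar q w u = - q u := by rw [polar_comm]; exact hpuw
  have hpuw0 : polar q u w ≠ 0 := by rw [hpuw, hneg]; exact hqu
  have hu0 : u ≠ 0 := fun h => hqu (by simp [h])
  have hw0 : w ≠ 0 := by
    intro h
    apply hu0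
    have := hw
    rw [h, map_zero, zero_add] at this
    exact this.symm
  have li : LinearIndependent F ![u, w] := by
    rw [LinearIndependent.pair_iff]
    intro s t hst
    have h3 := congrArg (fun z => polar q z w) hst
    simp only [polar_add_left, polar_smul_left, polar_zero_left, smul_eq_mul, hps, hpuw,
      mul_zero, add_zero] at h3
    have hs : s = 0 := by
      rcases mul_eq_zero.1 h3 with h | h
      · exact h
      · exact absurd (by rw [hneg] at h; exact h) hqu
    refine ⟨hs, ?_⟩
    rw [hs, zero_smul, zero_add] at hst
    rcases smul_eq_zero.1 hst with h | h
    · exact h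
    · exact absurd h hw0
  have hset : ({u, w} : Set V) = Set.range ![u, w] := by
    ext x
    simp [Fin.exists_fin_two]
    tauto
  refine ⟨?_, ?_, ?_⟩
  · rw [hset, finrank_span_eq_card li]
    simp
  · intro x hx
    rw [Submodule.mem_span_pair] at hx
    obtain ⟨a, b, rfl⟩ := hx
    rw [map_add, _root_.map_smul, _root_.map_smul, hu, hw]
    exact Submodule.mem_span_pair.2 ⟨a + b, b, by module⟩
  · intro v hv
    rw [Submodule.mem_span_pair] at hv
    obtain ⟨a, b, rfl⟩ := hv
    have hc : polar q (a • u + b • w) u = b * q u := by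
      rw [polar_add_left, polar_smul_left, polar_smul_left, hps, hpwu, smul_eq_mul,
        smul_eq_mul, mul_zero, zero_add, mul_neg, hneg]
    rw [hc, mul_div_assoc, div_self hqu, mul_one, map_add, _root_.map_smul, _root_.map_smul, hu, hw]
    module

end Aux

theorem fix_dim_two_iff_interchange_or_sum_of_reflections
    (F : Type) [Field F] (hF : ringChar F = 2)
    (V : Type) [AddCommGroup V] [Module F V] [FiniteDimensional F V]
    (hdim : finrank F V = 4)
    (q : QuadraticForm F V)
    (hnd : ∀ x : V, (∀ y : V, QuadraticMap.polar q x y = 0) → x = 0)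
    (τ : V →ₗ[F] V) (hτq : ∀ v, q (τ v) = q v) (hτinv : ∀ v, τ (τ v) = v) :
    finrank F (LinearMap.ker (τ - LinearMap.id)) = 2 ↔
      ((finrank F (LinearMap.ker (τ - LinearMap.id)) = 2 ∧
          ∀ v : V, τ v = v → q v = 0) ∨
        ∃ E₁ E₂ : Submodule F V,
          E₁ ⊔ E₂ = ⊤ ∧ E₁ ⊓ E₂ = ⊥ ∧
          (∀ x ∈ E₁, ∀ y ∈ E₂, QuadraticMap.polar q x y = 0) ∧
          finrank F E₁ = 2 ∧ finrank F E₂ = 2 ∧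
          (∀ x ∈ E₁, τ x ∈ E₁) ∧ (∀ x ∈ E₂, τ x ∈ E₂) ∧
          (∃ u ∈ E₁, q u ≠ 0 ∧
            ∀ v ∈ E₁, τ v = v + (QuadraticMap.polar q v u / q u) • u) ∧
          (∃ u ∈ E₂, q u ≠ 0 ∧
            ∀ v ∈ E₂, τ v = v + (QuadraticMap.polar q v u / q u) • u)) := by
  haveI : CharP F 2 := ringChar.of_eq hF
  have h2 : (2 : F) = 0 := by exact_mod_cast CharP.cast_eq_zero F 2
  have h1 : (-1 : F) = 1 := by linear_combination -h2
  have hneg : ∀ a : F, -a = a := fun a => by rw [← neg_one_mul, h1, one_mul]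
  have hnegv : ∀ v : V, -v = v := fun v => by rw [← neg_one_smul F v, h1, one_smul]
  have key : ∀ x : V, x + x = 0 := fun x => by
    nth_rewrite 1 [← hnegv x]; exact neg_add_cancel x
  have hps : ∀ x : V, polar q x x = 0 := fun x => by
    rw [polar_self, two_smul, ← two_mul, h2, zero_mul]
  have hker : ∀ v : V, (v ∈ LinearMap.ker (τ - LinearMap.id) ↔ τ v = v) := fun v => by
    rw [LinearMap.mem_ker, LinearMap.sub_apply, LinearMap.id_apply, sub_eq_zero]
  have hpol : ∀ x y, polar q (τ x) (τ y) = polar q x y := fun x y => by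
    simp only [QuadraticMap.polar, ← map_add, hτq]
  constructor
  · -- forward direction
    intro hfix2
    by_cases hiso : ∀ v : V, τ v = v → q v = 0
    · exact Or.inl ⟨hfix2, hiso⟩
    right
    push_neg at hiso
    obtain ⟨u, huf, hqu⟩ := hiso
    have hu0 : u ≠ 0 := fun h => hqu (by simp [h])
    set S : V →ₗ[F] V := τ - LinearMap.id with hSdef
    have hSS : ∀ v, S (S v) = 0 := by
      intro v
      have h3 : S (S v) = τ (τ v - v) - (τ v - v) := rfl
      rw [h3, _root_.map_sub, hτinv]
      have h4 : v - τ v - (τ v - v) = (v - τ v) + (v - τ v) := by abel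
      rw [h4, key]
    have hle : LinearMap.range S ≤ LinearMap.ker S := by
      rintro x ⟨v, rfl⟩
      exact LinearMap.mem_ker.2 (hSS v)
    have hrk : finrank F (LinearMap.range S) = 2 := by
      have h := LinearMap.finrank_range_add_finrank_ker S
      rw [hfix2, hdim] at h
      omega
    have hre : LinearMap.range S = LinearMap.ker S :=
      Submodule.eq_of_le_of_finrank_le hle (by rw [hrk, hfix2])
    have hgetw : ∀ x : V, τ x = x → ∃ w : V, τ w = w + x := by
      intro x hx
      have hxr : x ∈ LinearMap.range S := by rw [hre]; exact (hker x).2 hx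
      obtain ⟨w, hw⟩ := hxr
      have hw' : τ w - w = x := hw
      exact ⟨w, by rw [← hw']; abel⟩
    have hpolτ1 : ∀ x y, τ y = y → polar q (τ x) y = polar q x y := fun x y hy => by
      conv_lhs => rw [← hy]
      rw [hpol]
    have hff : ∀ x y : V, τ x = x → τ y = y → polar q x y = 0 := by
      intro x y hx hy
      obtain ⟨v, hv⟩ := hgetw x hx
      have hx' : x = τ v - v := by rw [hv]; abel
      rw [hx', QuadraticMap.polar_sub_left, hpolτ1 v y hy, sub_self]
    have hnle : ¬ (LinearMap.ker S ≤ Submodule.span F {u}) := by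
      intro hle'
      have h4 := Submodule.finrank_mono hle'
      rw [hfix2, finrank_span_singleton hu0] at h4
      omega
    obtain ⟨u', hu'k, hu'sp⟩ := SetLike.not_le_iff_exists.1 hnle
    have hu'f : τ u' = u' := (hker u').1 hu'k
    obtain ⟨w, hw⟩ := hgetw u huf
    have hpuw : polar q u w = - q u := aux_polar_eq q τ hτq hw
    have hpuw0 : polar q u w ≠ 0 := by rw [hpuw, hneg]; exact hqu
    set c := polar q u' w / polar q u w with hc
    set u₂ := u' - c • u with hu₂def
    have hu₂f : τ u₂ = u₂ := by rw [hu₂def, _root_.map_sub, _root_.map_smul, hu'f, huf]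
    have hu₂0 : u₂ ≠ 0 := by
      intro h
      apply hu'sp
      have h5 : u' = c • u := by rwa [hu₂def, sub_eq_zero] at h
      rw [h5]
      exact Submodule.smul_mem _ _ (Submodule.mem_span_singleton_self u)
    have hu₂u : polar q u₂ u = 0 := by
      rw [hu₂def, QuadraticMap.polar_sub_left, QuadraticMap.polar_smul_left, hps,
        hff u' u hu'f huf, smul_zero, sub_zero]
    have hu₂w : polar q u₂ w = 0 := by
      rw [hu₂def, QuadraticMap.polar_sub_left, QuadraticMap.polar_smul_left, hc,
        smul_eq_mul, div_mul_cancel₀ _ hpuw0, sub_self]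
    obtain ⟨w₂', hw₂'⟩ := hgetw u₂ hu₂f
    have hw₂'u : polar q w₂' u = 0 := by
      have e1 := hpol w w₂'
      rw [hw, hw₂'] at e1
      rw [QuadraticMap.polar_add_left, QuadraticMap.polar_add_right, QuadraticMap.polar_add_right,
        QuadraticMap.polar_comm _ w u₂, hu₂w, QuadraticMap.polar_comm _ u u₂, hu₂u] at e1
      rw [QuadraticMap.polar_comm]
      linear_combination e1
    set d := polar q w₂' w / polar q u w with hd
    set w₂ := w₂' - d • u with hw₂def
    have hw2 : τ w₂ = w₂ + u₂ := by
      rw [hw₂def, _root_.map_sub, _root_.map_smul, hw₂', huf]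
      abel
    have hw₂u : polar q w₂ u = 0 := by
      rw [hw₂def, QuadraticMap.polar_sub_left, QuadraticMap.polar_smul_left, hps, smul_zero,
        sub_zero, hw₂'u]
    have hw₂w : polar q w₂ w = 0 := by
      rw [hw₂def, QuadraticMap.polar_sub_left, QuadraticMap.polar_smul_left, hd,
        smul_eq_mul, div_mul_cancel₀ _ hpuw0, sub_self]
    have hpu₂w₂ : polar q u₂ w₂ = - q u₂ := aux_polar_eq q τ hτq hw2
    have li4 : LinearIndependent F ![u, w, u₂, w₂] := by
      rw [Fintype.linearIndependent_iff]
      intro g hg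
      rw [Fin.sum_univ_four] at hg
      simp only [Matrix.cons_val_zero, Matrix.cons_val_one, Matrix.head_cons,
        Matrix.cons_val_two, Matrix.tail_cons, Matrix.cons_val_three, Matrix.head_fin_const] at hg
      have e1 := congrArg (fun z => polar q z u) hg
      simp only [QuadraticMap.polar_add_left, QuadraticMap.polar_smul_left,
        QuadraticMap.polar_zero_left, smul_eq_mul] at e1
      rw [hps, QuadraticMap.polar_comm _ w u, hpuw, hu₂u, hw₂u] at e1
      have hg1 : g 1 = 0 := by
        have h6 : g 1 * q u = 0 := by linear_combination -e1
        rcases mul_eq_zero.1 h6 with h | h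
        exacts [h, absurd h hqu]
      have e2 := congrArg (fun z => polar q z w) hg
      simp only [QuadraticMap.polar_add_left, QuadraticMap.polar_smul_left,
        QuadraticMap.polar_zero_left, smul_eq_mul] at e2
      rw [hpuw, hps, hu₂w, hw₂w] at e2
      have hg0 : g 0 = 0 := by
        have h6 : g 0 * q u = 0 := by linear_combination -e2
        rcases mul_eq_zero.1 h6 with h | h
        exacts [h, absurd h hqu]
      rw [hg0, hg1, zero_smul, zero_smul, zero_add, zero_add] at hg
      have e3 := congrArg τ hg
      rw [map_add, _root_.map_smul, _root_.map_smul, hu₂f, hw2, map_zero] at e3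
      have e4 : g 3 • u₂ = 0 := by
        have h5 : (g 2 • u₂ + g 3 • (w₂ + u₂)) - (g 2 • u₂ + g 3 • w₂) = 0 := by
          rw [e3, hg, sub_zero]
        rw [← h5]
        module
      have hg3 : g 3 = 0 := by
        rcases smul_eq_zero.1 e4 with h | h
        exacts [h, absurd h hu₂0]
      rw [hg3, zero_smul, add_zero] at hg
      have hg2 : g 2 = 0 := by
        rcases smul_eq_zero.1 hg with h | h
        exacts [h, absurd h hu₂0]
      intro i
      fin_cases i
      exacts [hg0, hg1, hg2, hg3]
    have hset4 : Set.range ![u, w, u₂, w₂] = {u, w, u₂, w₂} := by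
      ext x
      constructor
      · rintro ⟨i, rfl⟩
        fin_cases i <;> simp
      · rintro (rfl | rfl | rfl | rfl)
        exacts [⟨0, rfl⟩, ⟨1, rfl⟩, ⟨2, rfl⟩, ⟨3, rfl⟩]
    have hspan : Submodule.span F ({u, w, u₂, w₂} : Set V) = ⊤ := by
      rw [← hset4]
      apply Submodule.eq_top_of_finrank_eq
      rw [finrank_span_eq_card li4, hdim]
      simp
    have hqu₂ : q u₂ ≠ 0 := by
      intro h0
      apply hu₂0
      apply hnd
      intro y
      have hy : y ∈ Submodule.span F ({u, w, u₂, w₂} : Set V) := by rw [hspan]; trivial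
      induction hy using Submodule.span_induction with
      | mem z hz =>
        rcases hz with rfl | rfl | rfl | rfl
        · exact hu₂u
        · exact hu₂w
        · exact hps u₂
        · rw [hpu₂w₂, h0, neg_zero]
      | zero => exact QuadraticMap.polar_zero_right _ _
      | add x y hx hy ihx ihy => rw [QuadraticMap.polar_add_right, ihx, ihy, add_zero]
      | smul a x hx ih => rw [QuadraticMap.polar_smul_right, ih, smul_zero]
    obtain ⟨hr1a, hr1b, hr1c⟩ := aux_pack h1 q τ hτq huf hw hqu
    obtain ⟨hr2a, hr2b, hr2c⟩ := aux_pack h1 q τ hτq hu₂f hw2 hqu₂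
    have hsup : Submodule.span F ({u, w} : Set V) ⊔ Submodule.span F ({u₂, w₂} : Set V) = ⊤ := by
      rw [← Submodule.span_union, ← hspan]
      congr 1
      ext x
      simp only [Set.mem_union, Set.mem_insert_iff, Set.mem_singleton_iff]
      tauto
    refine ⟨Submodule.span F {u, w}, Submodule.span F {u₂, w₂}, hsup, ?_, ?_, hr1a, hr2a,
      hr1b, hr2b,
      ⟨u, Submodule.subset_span (by simp), hqu, hr1c⟩,
      ⟨u₂, Submodule.subset_span (by simp), hqu₂, hr2c⟩⟩
    · have h6 := Submodule.finrank_sup_add_finrank_inf_eq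
        (Submodule.span F ({u, w} : Set V)) (Submodule.span F ({u₂, w₂} : Set V))
      rw [hsup, finrank_top, hdim, hr1a, hr2a] at h6
      have h7 : finrank F
          ↥(Submodule.span F ({u, w} : Set V) ⊓ Submodule.span F ({u₂, w₂} : Set V)) = 0 := by
        omega
      exact Submodule.finrank_eq_zero.1 h7
    · intro x hx y hy
      rw [Submodule.mem_span_pair] at hx hy
      obtain ⟨a, b, rfl⟩ := hx
      obtain ⟨c', d', rfl⟩ := hy
      have hz1 : polar q u u₂ = 0 := (QuadraticMap.polar_comm _ u u₂).trans hu₂u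
      have hz2 : polar q u w₂ = 0 := (QuadraticMap.polar_comm _ u w₂).trans hw₂u
      have hz3 : polar q w u₂ = 0 := (QuadraticMap.polar_comm _ w u₂).trans hu₂w
      have hz4 : polar q w w₂ = 0 := (QuadraticMap.polar_comm _ w w₂).trans hw₂w
      simp only [QuadraticMap.polar_add_left, QuadraticMap.polar_add_right,
        QuadraticMap.polar_smul_left, QuadraticMap.polar_smul_right, smul_eq_mul,
        hz1, hz2, hz3, hz4, mul_zero, add_zero, zero_add]
  · -- reverse direction
    rintro (⟨h, _⟩ | ⟨E₁, E₂, hsup, hinf, horth, hf1, hf2, hi1, hi2,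
      ⟨u₁, hu₁E, hqu₁, href1⟩, ⟨u₂, hu₂E, hqu₂, href2⟩⟩)
    · exact h
    have hu₁f : τ u₁ = u₁ := by rw [href1 u₁ hu₁E, hps, zero_div, zero_smul, add_zero]
    have hu₂f : τ u₂ = u₂ := by rw [href2 u₂ hu₂E, hps, zero_div, zero_smul, add_zero]
    have hu₁0 : u₁ ≠ 0 := fun h => hqu₁ (by simp [h])
    have hu₂0 : u₂ ≠ 0 := fun h => hqu₂ (by simp [h])
    have main : ∀ (A B : Submodule F V) (u₀ : V), A ⊔ B = ⊤ →
        (∀ x ∈ A, ∀ y ∈ B, polar q x y = 0) → finrank F A = 2 → u₀ ∈ A → q u₀ ≠ 0 →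
        (∀ v ∈ A, τ v = v + (polar q v u₀ / q u₀) • u₀) →
        ∀ x, x ∈ A → τ x = x → x ∈ Submodule.span F ({u₀} : Set V) := by
      intro A B u₀ hsupAB horthAB hfA hu₀A hq href x hxA hxf
      have hu₀0 : u₀ ≠ 0 := fun h => hq (by simp [h])
      have hz : ∃ z ∈ A, polar q z u₀ ≠ 0 := by
        by_contra hcon
        push_neg at hcon
        refine hq ?_
        have h0 : u₀ = 0 := by
          apply hnd
          intro y
          have hy : y ∈ A ⊔ B := by rw [hsupAB]; trivial
          obtain ⟨y₁, hy₁, y₂, hy₂, rfl⟩ := Submodule.mem_sup.1 hy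
          rw [QuadraticMap.polar_add_right, QuadraticMap.polar_comm _ u₀ y₁, hcon y₁ hy₁,
            horthAB u₀ hu₀A y₂ hy₂, add_zero]
        rw [h0]; simp
      obtain ⟨z, hzA, hzu⟩ := hz
      have liz : LinearIndependent F ![u₀, z] := by
        rw [LinearIndependent.pair_iff]
        intro s t hst
        have e := congrArg (fun v => polar q v u₀) hst
        simp only [QuadraticMap.polar_add_left, QuadraticMap.polar_smul_left,
          QuadraticMap.polar_zero_left, smul_eq_mul] at e
        rw [hps] at e
        have ht : t = 0 := by
          have h3 : t * polar q z u₀ = 0 := by linear_combination e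
          rcases mul_eq_zero.1 h3 with h | h
          exacts [h, absurd h hzu]
        rw [ht, zero_smul, add_zero] at hst
        have hs : s = 0 := by
          rcases smul_eq_zero.1 hst with h | h
          exacts [h, absurd h hu₀0]
        exact ⟨hs, ht⟩
      have hsp : Submodule.span F ({u₀, z} : Set V) = A := by
        apply Submodule.eq_of_le_of_finrank_le
        · rw [Submodule.span_le]
          rintro v hv
          rcases hv with rfl | rfl
          exacts [hu₀A, hzA]
        · rw [hfA]
          have hpr : ({u₀, z} : Set V) = Set.range ![u₀, z] := by
            ext x'
            simp [Fin.exists_fin_two]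
            tauto
          rw [hpr, finrank_span_eq_card liz]
          simp
      have hx0 : polar q x u₀ = 0 := by
        have h4 := href x hxA
        rw [hxf] at h4
        have h5 : (polar q x u₀ / q u₀) • u₀ = 0 := (left_eq_add.1 h4)
        rcases smul_eq_zero.1 h5 with h | h
        · exact (div_eq_zero_iff.1 h).resolve_right hq
        · exact absurd h hu₀0
      rw [← hsp, Submodule.mem_span_pair] at hxA
      obtain ⟨a, b, hab⟩ := hxA
      have hb : b = 0 := by
        have e := congrArg (fun v => polar q v u₀) hab
        simp only [QuadraticMap.polar_add_left, QuadraticMap.polar_smul_left, smul_eq_mul] at e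
        rw [hps, hx0] at e
        have h3 : b * polar q z u₀ = 0 := by linear_combination e
        rcases mul_eq_zero.1 h3 with h | h
        exacts [h, absurd h hzu]
      rw [← hab, hb, zero_smul, add_zero]
      exact Submodule.smul_mem _ _ (Submodule.mem_span_singleton_self u₀)
    have horth2 : ∀ x ∈ E₂, ∀ y ∈ E₁, polar q x y = 0 := fun x hx y hy =>
      (QuadraticMap.polar_comm _ x y).trans (horth y hy x hx)
    have hker_eq : LinearMap.ker (τ - LinearMap.id) = Submodule.span F ({u₁, u₂} : Set V) := by
      apply le_antisymm
      · intro v hv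
        have hvf : τ v = v := (hker v).1 hv
        have hv' : v ∈ E₁ ⊔ E₂ := by rw [hsup]; trivial
        obtain ⟨x, hx, y, hy, rfl⟩ := Submodule.mem_sup.1 hv'
        have h8 : τ x + τ y = x + y := by rw [← map_add]; exact hvf
        have hxy : τ x - x = y - τ y := by
          rw [sub_eq_sub_iff_add_eq_add, h8, add_comm]
        have hmem : τ x - x ∈ E₁ ⊓ E₂ :=
          ⟨E₁.sub_mem (hi1 x hx) hx, by rw [hxy]; exact E₂.sub_mem hy (hi2 y hy)⟩
        rw [hinf, Submodule.mem_bot] at hmem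
        have hxf : τ x = x := sub_eq_zero.1 hmem
        have hyf : τ y = y := (sub_eq_zero.1 (hxy ▸ hmem : y - τ y = 0)).symm
        have hx1 := main E₁ E₂ u₁ hsup horth hf1 hu₁E hqu₁ href1 x hx hxf
        have hy1 := main E₂ E₁ u₂ (by rwa [sup_comm]) horth2 hf2 hu₂E hqu₂ href2 y hy hyf
        have hm1 : Submodule.span F ({u₁} : Set V) ≤ Submodule.span F ({u₁, u₂} : Set V) :=
          Submodule.span_mono (by simp)
        have hm2 : Submodule.span F ({u₂} : Set V) ≤ Submodule.span F ({u₁, u₂} : Set V) :=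
          Submodule.span_mono (by simp)
        exact Submodule.add_mem _ (hm1 hx1) (hm2 hy1)
      · rw [Submodule.span_le]
        rintro z (rfl | rfl)
        · exact (hker z).2 hu₁f
        · exact (hker z).2 hu₂f
    have li : LinearIndependent F ![u₁, u₂] := by
      rw [LinearIndependent.pair_iff]
      intro s t hst
      have h9 : s • u₁ ∈ E₁ ⊓ E₂ := by
        constructor
        · exact E₁.smul_mem s hu₁E
        · have h10 : s • u₁ = -(t • u₂) := eq_neg_of_add_eq_zero_left hst
          rw [h10]
          exact E₂.neg_mem (E₂.smul_mem t hu₂E)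
      rw [hinf, Submodule.mem_bot] at h9
      have hs : s = 0 := by
        rcases smul_eq_zero.1 h9 with h | h
        exacts [h, absurd h hu₁0]
      rw [hs, zero_smul, zero_add] at hst
      have ht : t = 0 := by
        rcases smul_eq_zero.1 hst with h | h
        exacts [h, absurd h hu₂0]
      exact ⟨hs, ht⟩
    rw [hker_eq]
    have hpr : ({u₁, u₂} : Set V) = Set.range ![u₁, u₂] := by
      ext x
      simp [Fin.exists_fin_two]
      tauto
    rw [hpr, finrank_span_eq_card li]
    simp
end

section
/- For i = 1,…,n let (Eᵢ,φᵢ) be a 2-dimensional quadratic space over a field F of characteristic 2 and let τᵢ = τ_{uᵢ} be the reflection of (Eᵢ,φᵢ) along an anisotropic vector uᵢ. Let (V,q) = (E₁,φ₁) ⊥ ⋯ ⊥ (Eₙ,φₙ) and τ = τ₁ ⊥ ⋯ ⊥ τₙ. Then φᵢ(uᵢ) ∈ F^{×2} for every i = 1,…,n if and only if q(x) ∈ F² for every x ∈ fix(V,τ). -/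
open Module

theorem spinor_norms_trivial_iff_fixed_values_squares
    (F : Type) [Field F] (hF : ringChar F = 2)
    (V : Type) [AddCommGroup V] [Module F V] [FiniteDimensional F V]
    (q : QuadraticForm F V)
    (n : ℕ) (E : Fin n → Submodule F V)
    (hspan : (⨆ i, E i) = ⊤)
    (hdim : ∀ i, finrank F (E i) = 2)
    (horth : ∀ i j, i ≠ j → ∀ x ∈ E i, ∀ y ∈ E j, QuadraticMap.polar q x y = 0)
    (hndE : ∀ i, ∀ x ∈ E i, (∀ y ∈ E i, QuadraticMap.polar q x y = 0) → x = 0)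
    (u : Fin n → V) (hu : ∀ i, u i ∈ E i) (hanis : ∀ i, q (u i) ≠ 0)
    (τ : V →ₗ[F] V)
    (hτ : ∀ i, ∀ v ∈ E i,
      τ v = v + (QuadraticMap.polar q v (u i) / q (u i)) • u i) :
    (∀ i, ∃ d : F, d ≠ 0 ∧ q (u i) = d ^ 2) ↔
      (∀ v : V, τ v = v → ∃ d : F, q v = d ^ 2) := by
  classical
  have h2 : (2 : F) = 0 := by
    haveI : CharP F 2 := hF ▸ ringChar.charP F
    exact_mod_cast CharP.cast_eq_zero F 2
  have hune : ∀ i, u i ≠ 0 := fun i h => hanis i (by rw [h, QuadraticMap.map_zero])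
  have hpself : ∀ x : V, QuadraticMap.polar q x x = 0 := fun x => by
    rw [QuadraticMap.polar_self, two_smul, ← two_mul, h2, zero_mul]
  have hτu : ∀ i, τ (u i) = u i := fun i => by
    rw [hτ i (u i) (hu i), hpself, zero_div, zero_smul, add_zero]
  -- polar of a sum in the left argument
  have hpolar_sum : ∀ (g : Fin n → V) (y : V),
      QuadraticMap.polar q (∑ i, g i) y = ∑ i, QuadraticMap.polar q (g i) y := by
    intro g y
    simp_rw [← QuadraticMap.polarBilin_apply_apply]
    rw [map_sum, LinearMap.sum_apply]
  have hpolar_sum' : ∀ (x : V) (g : Fin n → V),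
      QuadraticMap.polar q x (∑ i, g i) = ∑ i, QuadraticMap.polar q x (g i) := by
    intro x g
    simp_rw [← QuadraticMap.polarBilin_apply_apply]
    rw [map_sum]
  -- independence of the family of orthogonal nondegenerate submodules
  have hindep : ∀ g : Fin n → V, (∀ i, g i ∈ E i) → (∑ i, g i) = 0 → ∀ j, g j = 0 := by
    intro g hg hsum j
    apply hndE j (g j) (hg j)
    intro y hy
    have h0 : QuadraticMap.polar q (∑ i, g i) y = 0 := by
      rw [hsum, QuadraticMap.polar_zero_left]
    rw [hpolar_sum] at h0
    rwa [Finset.sum_eq_single j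
      (fun i _ hij => horth i j hij (g i) (hg i) y hy)
      (fun h => absurd (Finset.mem_univ j) h)] at h0
  -- orthogonal of u i inside E i is spanned by u i
  have hker : ∀ i, ∀ x ∈ E i, QuadraticMap.polar q x (u i) = 0 → ∃ c : F, x = c • u i := by
    intro i x hx hpx
    set ψ : V →ₗ[F] F := (QuadraticMap.polarBilin q).flip (u i) with hψ
    have hψval : ∀ z : V, ψ z = QuadraticMap.polar q z (u i) := fun z => rfl
    set φ : (E i) →ₗ[F] F := ψ.comp (E i).subtype with hφ
    have hφval : ∀ z : E i, φ z = QuadraticMap.polar q (z : V) (u i) := fun z => rfl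
    have hφne : φ ≠ 0 := by
      intro h0
      apply hune i
      apply hndE i (u i) (hu i)
      intro y hy
      have := congrFun (congrArg DFunLike.coe h0) ⟨y, hy⟩
      rw [hφval] at this
      rw [QuadraticMap.polar_comm]
      exact this
    have hrange : finrank F (LinearMap.range φ) = 1 := by
      refine le_antisymm ?_ ?_
      · calc finrank F (LinearMap.range φ) ≤ finrank F F := Submodule.finrank_le _
          _ = 1 := finrank_self F
      · rw [Nat.one_le_iff_ne_zero]
        intro h0
        rw [Submodule.finrank_eq_zero, LinearMap.range_eq_bot] at h0
        exact hφne h0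
    have hkr : finrank F (LinearMap.ker φ) = 1 := by
      have hrn := LinearMap.finrank_range_add_finrank_ker φ
      rw [hdim i, hrange] at hrn
      omega
    set K : Submodule F V := (LinearMap.ker φ).map (E i).subtype with hK
    have hKrank : finrank F K = 1 := by
      rw [hK, ← hkr]
      exact ((Submodule.equivMapOfInjective _ ((E i).injective_subtype) _).finrank_eq).symm
    have huK : ∀ z : V, ∀ hz : z ∈ E i, QuadraticMap.polar q z (u i) = 0 → z ∈ K := by
      intro z hz hpz
      refine Submodule.mem_map.mpr ⟨⟨z, hz⟩, ?_, rfl⟩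
      rw [LinearMap.mem_ker, hφval]
      exact hpz
    have hsub : Submodule.span F {u i} ≤ K := by
      rw [Submodule.span_le, Set.singleton_subset_iff]
      exact huK (u i) (hu i) (hpself (u i))
    have hspaneq : Submodule.span F {u i} = K :=
      Submodule.eq_of_le_of_finrank_eq hsub
        (by rw [finrank_span_singleton (hune i), hKrank])
    have hxK : x ∈ Submodule.span F {u i} := hspaneq ▸ huK x hx hpx
    obtain ⟨c, hc⟩ := Submodule.mem_span_singleton.mp hxK
    exact ⟨c, hc.symm⟩
  -- q of an orthogonal sum
  have hqsum : ∀ g : Fin n → V, (∀ i, g i ∈ E i) → q (∑ i, g i) = ∑ i, q (g i) := by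
    intro g hg
    have key : ∀ s : Finset (Fin n), q (∑ i ∈ s, g i) = ∑ i ∈ s, q (g i) := by
      intro s
      induction s using Finset.cons_induction with
      | empty => simp
      | cons a s ha ih =>
        rw [Finset.sum_cons, Finset.sum_cons, ← ih]
        have hadd : q (g a + ∑ i ∈ s, g i) =
            q (g a) + q (∑ i ∈ s, g i) + QuadraticMap.polar q (g a) (∑ i ∈ s, g i) := by
          rw [QuadraticMap.polar]; ring
        have hcross : QuadraticMap.polar q (g a) (∑ i ∈ s, g i) = 0 := by
          simp_rw [← QuadraticMap.polarBilin_apply_apply]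
          rw [map_sum]
          apply Finset.sum_eq_zero
          intro i hi
          have hia : a ≠ i := fun h => ha (h ▸ hi)
          exact horth a i hia (g a) (hg a) (g i) (hg i)
        rw [hadd, hcross, add_zero]
    exact key Finset.univ
  -- sums of squares are squares in characteristic two
  have hsqsum : ∀ (c : Fin n → F), ∃ d : F, ∑ i, (c i) ^ 2 = d ^ 2 := by
    intro c
    have key : ∀ s : Finset (Fin n), ∃ d : F, ∑ i ∈ s, (c i) ^ 2 = d ^ 2 := by
      intro s
      induction s using Finset.cons_induction with
      | empty => exact ⟨0, by simp⟩
      | cons a s ha ih =>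
        obtain ⟨d, hd⟩ := ih
        refine ⟨c a + d, ?_⟩
        rw [Finset.sum_cons, hd, add_sq, h2, zero_mul, zero_mul, add_zero]
    exact key Finset.univ
  constructor
  · -- forward direction
    intro h v hv
    choose d hd0 hd using h
    have hv' : v ∈ ⨆ i, E i := hspan ▸ Submodule.mem_top
    rw [Submodule.mem_iSup_iff_exists_finsupp] at hv'
    obtain ⟨f, hfmem, hfsum⟩ := hv'
    have hvsum : v = ∑ i, f i := by
      rw [← hfsum, Finsupp.sum_fintype]
      intro i; rfl
    -- the components of v are orthogonal to the u i
    have hcomp : ∀ i, QuadraticMap.polar q (f i) (u i) = 0 := by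
      have hτv : ∑ i, ((QuadraticMap.polar q (f i) (u i) / q (u i)) • u i) = 0 := by
        have : τ v = ∑ i, (f i + (QuadraticMap.polar q (f i) (u i) / q (u i)) • u i) := by
          rw [hvsum, map_sum]
          exact Finset.sum_congr rfl fun i _ => hτ i (f i) (hfmem i)
        rw [hv, Finset.sum_add_distrib, ← hvsum] at this
        exact left_eq_add.mp this
      intro i
      have hterm : (QuadraticMap.polar q (f i) (u i) / q (u i)) • u i = 0 :=
        hindep _ (fun j => Submodule.smul_mem _ _ (hu j)) hτv i
      rcases smul_eq_zero.mp hterm with hc | hui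
      · rcases div_eq_zero_iff.mp hc with h' | h'
        · exact h'
        · exact absurd h' (hanis i)
      · exact absurd hui (hune i)
    choose c hc using fun i => hker i (f i) (hfmem i) (hcomp i)
    have hqv : q v = ∑ i, (c i * d i) ^ 2 := by
      rw [hvsum, hqsum f hfmem]
      apply Finset.sum_congr rfl
      intro i _
      rw [hc i, QuadraticMap.map_smul, hd i, smul_eq_mul]
      ring
    obtain ⟨e, he⟩ := hsqsum fun i => c i * d i
    exact ⟨e, by rw [hqv, he]⟩
  · -- reverse direction
    intro h i
    obtain ⟨d, hd⟩ := h (u i) (hτu i)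
    refine ⟨d, ?_, hd⟩
    intro h0
    exact hanis i (by rw [hd, h0, pow_two, mul_zero])
end

section
/- Let K/F be an extension of fields of characteristic 2, let α ∈ F^×, and let σ be an involution of orthogonal type on M₂(K) such that some nonzero r ∈ Alt(M₂(K),σ) satisfies r² = α·I₂ (i.e. disc σ = αK^{×2}). Then there exist a 2-dimensional K-vector space W, a nondegenerate symmetric bilinear form b on W, and an orthogonal basis {u,v} of (W,b) with b(u,u) = 1 and b(v,v) = α, such that (M₂(K),σ) ≅ (End_K(W), ad_b) as K-algebras with involution. -/
/-!
By Skolem–Noether the automorphism `M ↦ (σ M)ᵀ` of `M₂(K)` is conjugation by an invertible `G`,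
i.e. `σ` is adjoint to the bilinear form with Gram matrix `G`. Since `σ² = id`, `G⁻¹ Gᵀ` is
central, which forces `Gᵀ = ±G`, so `G` is symmetric in characteristic 2. If the diagonal of `G`
vanished, `G = s - sᵀ` would be alternating and `a = G⁻¹ s` would satisfy `a - σ a = 1`; so the
form has an anisotropic vector `eᵢ`. For `r = y - σ y` the matrix `G r = G y - (G y)ᵀ` is
alternating, so its determinant `det G · det r = α · det G` is a square. After scaling `G` so
that `eᵢ` has length 1, the orthogonal complement of `eᵢ` is therefore spanned by a vector of
length `α`.
-/

open Matrix

theorem map_one_of_antimul_of_involutive {R : Type*} [MulOneClass R] (σ : R → R)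
    (hanti : ∀ x y, σ (x * y) = σ y * σ x) (hinv : ∀ x, σ (σ x) = x) : σ 1 = 1 :=
  calc σ 1 = σ 1 * σ (σ 1) := by rw [hinv, mul_one]
    _ = σ (σ 1 * 1) := (hanti _ _).symm
    _ = 1 := by rw [mul_one, hinv]

theorem LinearMap.BilinForm.span_pair_eq_top_of_finrank_eq_two {K V : Type*} [Field K]
    [AddCommGroup V] [Module K V] (h2 : Module.finrank K V = 2) {B : LinearMap.BilinForm K V}
    {x w : V} (hxw : B x w = 0) (hwx : B w x = 0) (hx : B x x ≠ 0) (hw : B w w ≠ 0) :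
    Submodule.span K {x, w} = ⊤ := by
  have hli : LinearIndependent K ![x, w] :=
    linearIndependent_of_iIsOrtho (B := B)
      (fun i j hij => by fin_cases i <;> fin_cases j <;> simp_all [Function.onFun])
      (fun i => by fin_cases i <;> simpa)
  have hspan := hli.span_eq_top_of_card_eq_finrank (by simp [h2])
  rwa [Matrix.range_cons_cons_empty] at hspan

namespace Matrix

variable {n K : Type*} [Fintype n] [Field K]

theorem exists_isUnit_mul_eq_mul_of_algEquiv [DecidableEq n]
    (φ : Matrix n n K ≃ₐ[K] Matrix n n K) :
    ∃ P : Matrix n n K, IsUnit P ∧ ∀ M, φ M * P = P * M := by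
  obtain ⟨T, hT⟩ :=
    (toLinAlgEquiv'.symm.trans (φ.trans toLinAlgEquiv')).eq_linearEquivConjAlgEquiv
  refine ⟨LinearMap.toMatrix' T,
    LinearMap.isUnit_toMatrix'_iff.mpr ((Module.End.isUnit_iff _).mpr T.bijective), fun M => ?_⟩
  have hφM := DFunLike.congr_fun hT (toLinAlgEquiv' M)
  simp only [AlgEquiv.trans_apply, AlgEquiv.symm_apply_apply,
    LinearEquiv.conjAlgEquiv_apply] at hφM
  apply toLin'.injective
  rw [toLin'_mul, toLin'_mul, toLin'_toMatrix']
  change toLinAlgEquiv' (φ M) ∘ₗ _ = _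
  rw [hφM]
  ext x
  simp

theorem exists_eq_smul_of_mul_eq_mul [DecidableEq n] (φ : Matrix n n K → Matrix n n K)
    {P H : Matrix n n K} (hP : IsUnit P) (hφP : ∀ M, φ M * P = P * M)
    (hφH : ∀ M, φ M * H = H * M) : ∃ c : K, H = c • P := by
  have hdet : IsUnit P.det := (isUnit_iff_isUnit_det P).mp hP
  have hPinv : P⁻¹ * P = 1 := nonsing_inv_mul P hdet
  have hcomm : ∀ M, Commute M (P⁻¹ * H) := fun M => by
    have hφ : P⁻¹ * φ M = M * P⁻¹ := by
      rw [← hP.mul_left_inj, mul_assoc, hφP, ← mul_assoc, hPinv, one_mul, mul_assoc, hPinv,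
        mul_one]
    rw [Commute, SemiconjBy, ← mul_assoc, ← hφ, mul_assoc, hφH, mul_assoc]
  obtain ⟨c, hc⟩ := mem_range_scalar_iff_commute_single'.mpr fun i j => hcomm _
  refine ⟨c, ?_⟩
  calc H = P * (P⁻¹ * H) := (mul_nonsing_inv_cancel_left P H hdet).symm
    _ = c • P := by rw [← hc]; simp [← smul_one_eq_diagonal]

theorem exists_eq_sub_transpose_of_diag_eq_zero {ι : Type*} [LinearOrder ι] [CharP K 2]
    {G : Matrix ι ι K} (hGs : Gᵀ = G) (hdiag : ∀ i, G i i = 0) :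
    ∃ s : Matrix ι ι K, G = s - sᵀ := by
  refine ⟨of fun i j => if i < j then G i j else 0, ext fun i j => ?_⟩
  rcases lt_trichotomy i j with h | rfl | h
  · simp [h, h.not_gt]
  · simp [hdiag]
  · have hji : G j i = G i j := by rw [← transpose_apply G, hGs]
    simp [h, h.not_gt, CharTwo.neg_eq, hji]

theorem exists_isUnit_transpose_mul_eq_of_antiInvolution [DecidableEq n]
    (σ : Matrix n n K →ₗ[K] Matrix n n K) (hanti : ∀ x y, σ (x * y) = σ y * σ x)
    (hinv : ∀ x, σ (σ x) = x) : ∃ G : Matrix n n K, IsUnit G ∧ ∀ M, (σ M)ᵀ * G = G * M :=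
  exists_isUnit_mul_eq_mul_of_algEquiv <| .ofLinearEquiv
    ((LinearEquiv.ofInvolutive σ hinv).trans (transposeLinearEquiv n n K K))
    (show (σ 1)ᵀ = 1 by rw [map_one_of_antimul_of_involutive σ hanti hinv, transpose_one])
    (fun x y => show (σ (x * y))ᵀ = (σ x)ᵀ * (σ y)ᵀ by rw [hanti, transpose_mul])

section AdjointInvolution

variable {σ : Matrix n n K →ₗ[K] Matrix n n K} {G : Matrix n n K}

theorem transpose_mul_eq_transpose_mul_of_involutive (hinv : ∀ x, σ (σ x) = x)
    (hG : ∀ M, (σ M)ᵀ * G = G * M) (M : Matrix n n K) : (σ M)ᵀ * Gᵀ = Gᵀ * M := by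
  simpa [hinv] using congrArg transpose (hG (σ M)).symm

theorem transpose_eq_or_eq_neg [DecidableEq n] (hinv : ∀ x, σ (σ x) = x) (hGu : IsUnit G)
    (hG : ∀ M, (σ M)ᵀ * G = G * M) : Gᵀ = G ∨ Gᵀ = -G := by
  obtain ⟨c, hc⟩ := exists_eq_smul_of_mul_eq_mul (fun M => (σ M)ᵀ) hGu hG
    (transpose_mul_eq_transpose_mul_of_involutive hinv hG)
  rcases eq_or_ne G 0 with rfl | hG0
  · simp
  have hcc : (c * c) • G = (1 : K) • G := by
    rw [one_smul, ← smul_smul, ← hc, ← transpose_smul, ← hc, transpose_transpose]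
  rcases mul_self_eq_one_iff.mp (smul_left_injective K hG0 hcc) with rfl | rfl <;> simp [hc]

theorem exists_sub_eq_one_of_eq_sub_transpose [DecidableEq n] (hGs : Gᵀ = G) (hGu : IsUnit G)
    (hG : ∀ M, (σ M)ᵀ * G = G * M) {s : Matrix n n K} (hs : G = s - sᵀ) :
    ∃ a, a - σ a = 1 := by
  have hdet : IsUnit G.det := (isUnit_iff_isUnit_det G).mp hGu
  have hσa : G * σ (G⁻¹ * s) = sᵀ := by
    simpa [hGs, mul_nonsing_inv_cancel_left _ _ hdet] using congrArg transpose (hG (G⁻¹ * s))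
  refine ⟨G⁻¹ * s, hGu.mul_right_injective ?_⟩
  show G * (G⁻¹ * s - σ (G⁻¹ * s)) = G * 1
  rw [mul_sub, hσa, mul_nonsing_inv_cancel_left _ _ hdet, ← hs, mul_one]

theorem mul_sub_eq_sub_transpose (hinv : ∀ x, σ (σ x) = x) (hGs : Gᵀ = G)
    (hG : ∀ M, (σ M)ᵀ * G = G * M) (y : Matrix n n K) :
    G * (y - σ y) = G * y - (G * y)ᵀ := by
  rw [mul_sub, ← hG (σ y), hinv, transpose_mul, hGs]

end AdjointInvolution

theorem det_sub_transpose_fin_two {R : Type*} [CommRing R] (s : Matrix (Fin 2) (Fin 2) R) :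
    (s - sᵀ).det = (s 0 1 - s 1 0) ^ 2 := by
  rw [det_fin_two]
  simp only [sub_apply, transpose_apply, sub_self, mul_zero, zero_sub]
  ring

theorem det_eq_of_mul_self_eq_smul_one [CharP K 2] {r : Matrix (Fin 2) (Fin 2) K} {α : K}
    (hr : r * r = α • 1) : r.det = α := by
  apply CharTwo.sq_injective
  simp [sq, ← det_mul, hr]

theorem exists_toBilin'_orthogonal_fin_two {R : Type*} [CommRing R]
    {G : Matrix (Fin 2) (Fin 2) R} (hGs : Gᵀ = G) (x : Fin 2 → R) :
    ∃ w, G.toBilin' x w = 0 ∧ G.toBilin' w w = G.det * G.toBilin' x x := by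
  have h10 : G 1 0 = G 0 1 := by rw [← transpose_apply G, hGs]
  -- `G *ᵥ x` turned through a right angle: `b x w = (G *ᵥ x) ⬝ᵥ w` vanishes by symmetry of `G`.
  refine ⟨![(G *ᵥ x) 1, -(G *ᵥ x) 0], ?_, ?_⟩ <;>
  · simp [toBilin'_apply', dotProduct, mulVec, det_fin_two, Fin.sum_univ_two, h10]
    ring

theorem exists_toBilin'_orthogonal_of_mul_det_eq_sq {G : Matrix (Fin 2) (Fin 2) K}
    (hGs : Gᵀ = G) (hdet : G.det ≠ 0) {x : Fin 2 → K} (hx : G.toBilin' x x = 1) {α t : K}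
    (hα : α ≠ 0) (ht : α * G.det = t ^ 2) :
    ∃ v, G.toBilin' x v = 0 ∧ G.toBilin' v v = α ∧ Submodule.span K {x, v} = ⊤ := by
  obtain ⟨w, hxw, hww⟩ := exists_toBilin'_orthogonal_fin_two hGs x
  have hxv : G.toBilin' x ((t / G.det) • w) = 0 := by simp [hxw]
  have hvv : G.toBilin' ((t / G.det) • w) ((t / G.det) • w) = α := by
    simp only [map_smul, LinearMap.smul_apply, hww, hx, smul_eq_mul]
    field_simp
    linear_combination -ht
  have hvx : G.toBilin' ((t / G.det) • w) x = 0 := by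
    rw [(isSymm_toBilin'_iff_isSymm.mpr hGs).eq, hxv]
  exact ⟨_, hxv, hvv, LinearMap.BilinForm.span_pair_eq_top_of_finrank_eq_two (by simp) hxv hvx
    (by simp [hx]) (hvv ▸ hα)⟩

end Matrix

theorem orthogonal_involution_on_M2_adjoint_to_one_alpha
    (F K : Type) [Field F] [Field K] [Algebra F K] (hF : ringChar F = 2)
    (α : F) (hα : α ≠ 0)
    (σ : Matrix (Fin 2) (Fin 2) K →ₗ[K] Matrix (Fin 2) (Fin 2) K)
    (hanti : ∀ x y, σ (x * y) = σ y * σ x)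
    (hinv : ∀ x, σ (σ x) = x)
    (horth : ¬ ∃ a : Matrix (Fin 2) (Fin 2) K, a - σ a = 1)
    (hdisc : ∃ r : Matrix (Fin 2) (Fin 2) K, r ≠ 0 ∧ (∃ y, y - σ y = r) ∧
      r * r = algebraMap F K α • (1 : Matrix (Fin 2) (Fin 2) K)) :
    ∃ b : LinearMap.BilinForm K (Fin 2 → K),
      (∀ x y, b x y = b y x) ∧
      (∀ x, (∀ y, b x y = 0) → x = 0) ∧
      ∃ u v : Fin 2 → K,
        b u v = 0 ∧ b u u = 1 ∧ b v v = algebraMap F K α ∧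
        Submodule.span K {u, v} = ⊤ ∧
        ∃ f : Matrix (Fin 2) (Fin 2) K ≃ₐ[K] Module.End K (Fin 2 → K),
          ∀ M x y, b x (f M y) = b (f (σ M) x) y := by
  have : CharP K 2 := (Algebra.charP_iff F K 2).mp (ringChar.eq_iff.mp hF)
  obtain ⟨G, hGu, hG⟩ := exists_isUnit_transpose_mul_eq_of_antiInvolution σ hanti hinv
  have hGs : Gᵀ = G := (transpose_eq_or_eq_neg hinv hGu hG).elim id (·.trans (CharTwo.neg_eq G))
  obtain ⟨i, hi⟩ : ∃ i, G i i ≠ 0 := by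
    by_contra! hdiag
    obtain ⟨s, hs⟩ := exists_eq_sub_transpose_of_diag_eq_zero hGs hdiag
    exact horth (exists_sub_eq_one_of_eq_sub_transpose hGs hGu hG hs)
  obtain ⟨r, -, ⟨y, rfl⟩, hr⟩ := hdisc
  obtain ⟨t, ht⟩ : ∃ t, algebraMap F K α * G.det = t ^ 2 := ⟨_, by
    rw [mul_comm, ← det_eq_of_mul_self_eq_smul_one hr, ← det_mul,
      mul_sub_eq_sub_transpose hinv hGs hG, det_sub_transpose_fin_two]⟩
  set c := (G i i)⁻¹
  have hcGs : (c • G)ᵀ = c • G := by rw [transpose_smul, hGs]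
  have hcdet : (c • G).det ≠ 0 := by
    simp [c, hi, ((isUnit_iff_isUnit_det G).mp hGu).ne_zero]
  have hx : (c • G).toBilin' (Pi.single i 1) (Pi.single i 1) = 1 := by
    simp [toBilin'_apply', c, hi]
  obtain ⟨v, hxv, hvv, hspan⟩ := exists_toBilin'_orthogonal_of_mul_det_eq_sq hcGs hcdet hx
    ((map_ne_zero _).mpr hα) (t := c * t)
    (by rw [det_smul, Fintype.card_fin]; linear_combination c ^ 2 * ht)
  refine ⟨(c • G).toBilin', (isSymm_toBilin'_iff_isSymm.mpr hcGs).eq,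
    (nondegenerate_of_det_ne_zero hcdet).separatingLeft.toBilin', _, v, hxv, hx, hvv, hspan,
    toLinAlgEquiv', fun M x y => ?_⟩
  exact ((isAdjointPair_toLinearMap₂' _ _ _ _).mpr (by simp [IsAdjointPair, hG]) x y).symm
end

section
/- Let F be a field of arbitrary characteristic, let (A,σ) be a central simple F-algebra with involution of the first kind, let B be a simple F-subalgebra of A with center F such that σ(B) = B, and let C = C_A(B) be the centralizer of B in A. If char F ≠ 2, or if char F = 2 and 1 ∉ Alt(C,σ|_C), then Alt(A,σ) ∩ B = Alt(B,σ|_B). -/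
/-!
A central simple `B` is Azumaya: `B ⊗ Bᵐᵒᵖ ≅ End_F(B)`, by Artin's minimal-relation argument.
Composing the inverse with the action of `B ⊗ Bᵐᵒᵖ` on `A` by `a ↦ s a t` extends every
`F`-linear endomorphism `f` of `B` to one of `A` with `bz ↦ f(b) z` for `z ∈ C = C_A(B)`. Applied to
the coordinate forms of a basis `(β_j)` of `B`, this gives `E_j : A → C` with
`a = ∑ β_j E_j(a)` and `E_j(bz) = β_j^*(b) z`; in particular `A = B·C`.

In characteristic `≠ 2`, `c - σ c = 1` would give `2 = 0`, so in both cases `1 ∉ Alt(C, σ)`, and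
there is a linear form `μ` on `A` with `μ 1 = 1` and `μ ∘ σ = μ` on `C`. Then
`π a = ∑ μ(E_j a) β_j` is a projection onto `B` with `π(bz) = μ(z) b`; since
`σ(bz) = σ(b) σ(z)` with `σ(b) ∈ B`, `σ(z) ∈ C`, `π` commutes with `σ` on `B·C = A`. So if
`x ∈ B` and `x = y - σ y`, then `x = π x = π y - σ (π y)`.
-/

open TensorProduct

section Azumaya

variable {F D : Type*} [Field F] [Ring D]

def relationCoeffIdeal {ι : Type*} (β : ι → D) (s : Finset ι) (i₀ : ι) : TwoSidedIdeal D :=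
  .mk' {t | ∃ d : ι → D, (∀ x, ∑ i ∈ s, d i * x * β i = 0) ∧ d i₀ = t}
    ⟨0, by simp, rfl⟩
    (by
      rintro _ _ ⟨d, hd, rfl⟩ ⟨d', hd', rfl⟩
      exact ⟨d + d', fun x => by simp [add_mul, Finset.sum_add_distrib, hd, hd'], rfl⟩)
    (by
      rintro _ ⟨d, hd, rfl⟩
      exact ⟨-d, fun x => by simp [Finset.sum_neg_distrib, hd], rfl⟩)
    (by
      rintro a _ ⟨d, hd, rfl⟩
      refine ⟨fun i => a * d i, fun x => ?_, rfl⟩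
      rw [← mul_zero a, ← hd x, Finset.mul_sum]
      simp only [mul_assoc])
    (by
      rintro _ b ⟨d, hd, rfl⟩
      exact ⟨fun i => d i * b, fun x => by simpa [mul_assoc] using hd (b * x), rfl⟩)

theorem mem_relationCoeffIdeal {ι : Type*} {β : ι → D} {s : Finset ι} {i₀ : ι} {t : D} :
    t ∈ relationCoeffIdeal β s i₀ ↔ ∃ d : ι → D, (∀ x, ∑ i ∈ s, d i * x * β i = 0) ∧ d i₀ = t :=
  TwoSidedIdeal.mem_mk' ..

variable [IsSimpleRing D] [Algebra F D] [Algebra.IsCentral F D]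

theorem eq_zero_of_forall_sum_mul_mul_eq_zero {ι : Type*} {β : ι → D}
    (hβ : LinearIndependent F β) (s : Finset ι) (c : ι → D)
    (hc : ∀ x, ∑ i ∈ s, c i * x * β i = 0) : ∀ i ∈ s, c i = 0 := by
  classical
  induction s using Finset.strongInduction generalizing c with
  | H s ih =>
  by_contra! ⟨i₀, hi₀, hci₀⟩
  -- Normalise the relation so that its `i₀`-th coefficient is `1`; its commutators with any
  -- `y` are shorter relations, hence vanish, so all coefficients are central, i.e. scalars.
  obtain ⟨d, hd, hd₀⟩ := mem_relationCoeffIdeal.mp <|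
    IsSimpleRing.one_mem_of_ne_zero_mem _ hci₀ (mem_relationCoeffIdeal.mpr ⟨c, hc, rfl⟩)
  have hcentral : ∀ i ∈ s, ∃ ν : F, d i = algebraMap F D ν := by
    intro i hi
    refine (Algebra.IsCentral.mem_center_iff F).mp <| Subalgebra.mem_center_iff.mpr fun y => ?_
    by_cases hii₀ : i = i₀
    · simp [hii₀, hd₀]
    refine sub_eq_zero.mp <| ih (s.erase i₀) (Finset.erase_ssubset hi₀)
      (fun i => y * d i - d i * y) (fun x => ?_) i ?_
    · calc ∑ i ∈ s.erase i₀, (y * d i - d i * y) * x * β i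
          = ∑ i ∈ s, (y * d i - d i * y) * x * β i := Finset.sum_erase _ (by simp [hd₀])
        _ = y * ∑ i ∈ s, d i * x * β i - ∑ i ∈ s, d i * (y * x) * β i := by
          simp only [sub_mul, Finset.sum_sub_distrib, Finset.mul_sum, mul_assoc]
        _ = 0 := by rw [hd, hd, mul_zero, sub_zero]
    · exact Finset.mem_erase.mpr ⟨hii₀, hi⟩
  choose! ν hν using hcentral
  have hν₀ : ν i₀ = 0 := by
    refine linearIndependent_iff'.mp hβ s ν ?_ i₀ hi₀
    rw [← hd 1]
    exact Finset.sum_congr rfl fun i hi => by rw [hν i hi, mul_one, Algebra.smul_def]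
  simp [hν i₀ hi₀, hν₀] at hd₀

theorem IsAzumaya.of_isCentral_of_isSimpleRing [FiniteDimensional F D] : IsAzumaya F D := by
  have hinj : Function.Injective (AlgHom.mulLeftRight F D) := by
    rw [injective_iff_map_eq_zero]
    intro u hu
    let β := Module.finBasis F D
    obtain ⟨c, rfl⟩ := TensorProduct.eq_repr_basis_right (β.map (MulOpposite.opLinearEquiv F)) u
    have hc := eq_zero_of_forall_sum_mul_mul_eq_zero β.linearIndependent c.support c fun x => by
      simpa [Finsupp.sum] using DFunLike.congr_fun hu x
    exact Finset.sum_eq_zero fun i hi => by simp [hc i hi]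
  refine ⟨hinj, (LinearMap.injective_iff_surjective_of_finrank_eq_finrank ?_
    (f := (AlgHom.mulLeftRight F D).toLinearMap)).mp hinj⟩
  rw [Module.finrank_tensorProduct, Module.finrank_linearMap,
    (MulOpposite.opLinearEquiv F).finrank_eq]

end Azumaya

namespace Subalgebra

variable {R A : Type*} [CommSemiring R] [Semiring A] [Algebra R A]
  (B : Subalgebra R A) [IsAzumaya R B]

noncomputable def extendEnd : Module.End R B →ₐ[R] Module.End R A :=
  ((AlgHom.mulLeftRight R A).comp (Algebra.TensorProduct.map B.val (AlgHom.op B.val))).comp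
    (AlgEquiv.ofBijective _ IsAzumaya.bij).symm.toAlgHom

theorem extendEnd_mulLeft (b : B) :
    B.extendEnd (LinearMap.mulLeft R b) = LinearMap.mulLeft R (b : A) := by
  have : (AlgEquiv.ofBijective _ IsAzumaya.bij).symm (LinearMap.mulLeft R b) = b ⊗ₜ[R] 1 := by
    rw [AlgEquiv.symm_apply_eq]
    ext x
    simp
  ext x
  simp [extendEnd, this]

theorem extendEnd_mulRight (b : B) :
    B.extendEnd (LinearMap.mulRight R b) = LinearMap.mulRight R (b : A) := by
  have : (AlgEquiv.ofBijective _ IsAzumaya.bij).symm (LinearMap.mulRight R b) =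
      1 ⊗ₜ[R] MulOpposite.op b := by
    rw [AlgEquiv.symm_apply_eq]
    ext x
    simp
  ext x
  simp [extendEnd, this]

theorem extendEnd_apply_mul (f : Module.End R B) (b : B) {z : A}
    (hz : z ∈ centralizer R (B : Set A)) :
    B.extendEnd f (b * z) = f b * z := by
  obtain ⟨w, rfl⟩ := (AlgEquiv.ofBijective _ IsAzumaya.bij).surjective f
  rw [extendEnd, AlgHom.comp_apply, AlgEquiv.coe_toAlgHom, AlgEquiv.symm_apply_apply]
  induction w with
  | zero => simp
  | tmul s t =>
    simp [mul_assoc, (mem_centralizer_iff R).mp hz _ t.unop.2]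
  | add w₁ w₂ h₁ h₂ => simp_all [add_mul]

theorem exists_centralizer_coords {ι : Type*} [Fintype ι] (β : Module.Basis ι R B) :
    ∃ E : ι → Module.End R A, (∀ j a, E j a ∈ centralizer R (B : Set A)) ∧
      (∀ a, ∑ j, (β j : A) * E j a = a) ∧
      ∀ j (b : B) {z : A}, z ∈ centralizer R (B : Set A) → E j (b * z) = β.repr b j • z := by
  let φ (j : ι) : Module.End R B := (β.coord j).smulRight 1
  refine ⟨fun j => B.extendEnd (φ j), fun j a => ?_, fun a => ?_, fun j b z hz => ?_⟩
  · intro b hb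
    have : LinearMap.mulLeft R ⟨b, hb⟩ * φ j = LinearMap.mulRight R ⟨b, hb⟩ * φ j := by
      ext x
      simp [φ]
    simpa [extendEnd_mulLeft, extendEnd_mulRight] using
      DFunLike.congr_fun (congrArg B.extendEnd this) a
  · have : ∑ j, LinearMap.mulLeft R (β j) * φ j = 1 := by
      ext x
      simp [φ, β.sum_repr]
    simpa [extendEnd_mulLeft] using DFunLike.congr_fun (congrArg B.extendEnd this) a
  · simp [extendEnd_apply_mul B _ b hz, φ]

variable [Module.Free R B]

theorem toSubmodule_mul_centralizer_eq_top :
    toSubmodule B * toSubmodule (centralizer R (B : Set A)) = ⊤ := by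
  obtain ⟨E, hEC, hEsum, -⟩ := B.exists_centralizer_coords (Module.Free.chooseBasis R B)
  refine eq_top_iff.mpr fun a _ => ?_
  rw [← hEsum a]
  exact Submodule.sum_mem _ fun j _ => Submodule.mul_mem_mul (Subtype.prop _) (hEC j a)

theorem exists_linearMap_apply_mul_centralizer (μ : A →ₗ[R] R) :
    ∃ π : A →ₗ[R] B, ∀ (b : B) {z : A}, z ∈ centralizer R (B : Set A) → π (b * z) = μ z • b := by
  let β := Module.Free.chooseBasis R B
  obtain ⟨E, -, -, hE⟩ := B.exists_centralizer_coords β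
  refine ⟨∑ j, (μ ∘ₗ E j).smulRight (β j), fun b z hz => ?_⟩
  calc (∑ j, (μ ∘ₗ E j).smulRight (β j)) (b * z) = ∑ j, μ z • β.repr b j • β j := by
        simp only [LinearMap.sum_apply, LinearMap.smulRight_apply, LinearMap.comp_apply]
        simp only [hE _ b hz, map_smul, smul_eq_mul, mul_comm, mul_smul]
    _ = μ z • b := by rw [← Finset.smul_sum, β.sum_repr]

theorem linearMap_ext_of_apply_mul_centralizer {M : Type*} [AddCommMonoid M] [Module R M]
    {f g : A →ₗ[R] M} (h : ∀ b ∈ B, ∀ z ∈ centralizer R (B : Set A), f (b * z) = g (b * z)) :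
    f = g := by
  ext a
  have ha : a ∈ toSubmodule B * toSubmodule (centralizer R (B : Set A)) := by
    simp [B.toSubmodule_mul_centralizer_eq_top]
  exact Submodule.mul_induction_on ha (fun b hb z hz => h b hb z hz) fun x y hx hy => by
    simp [hx, hy]

end Subalgebra

theorem exists_dual_eq_one_of_not_exists_sub_eq {K V : Type*} [Field K] [AddCommGroup V]
    [Module K V] (τ : V →ₗ[K] V) (C : Submodule K V) {v : V} (hv : ¬ ∃ c ∈ C, c - τ c = v) :
    ∃ μ : V →ₗ[K] K, μ v = 1 ∧ ∀ c ∈ C, μ (τ c) = μ c := by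
  have hvW : v ∉ C.map (LinearMap.id - τ) := fun ⟨c, hc, hcv⟩ => hv ⟨c, hc, hcv⟩
  obtain ⟨f, hfv, hWf⟩ := Submodule.exists_le_ker_of_notMem hvW
  refine ⟨(f v)⁻¹ • f, inv_mul_cancel₀ hfv, fun c hc => ?_⟩
  have : f (c - τ c) = 0 := hWf ⟨c, hc, rfl⟩
  simp [sub_eq_zero.mp (by simpa using this)]

section Involution

variable {F A : Type*} [Field F] [Ring A] [Algebra F A] {σ : A →ₗ[F] A}

theorem map_one_of_anti (hanti : ∀ x y, σ (x * y) = σ y * σ x) (hinv : ∀ x, σ (σ x) = x) :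
    σ 1 = 1 := by
  simpa [hinv] using (hanti (σ 1) 1).symm

theorem map_mem_centralizer_of_anti (hanti : ∀ x y, σ (x * y) = σ y * σ x)
    (hinv : ∀ x, σ (σ x) = x) {S : Set A} (hS : ∀ x ∈ S, σ x ∈ S) {z : A}
    (hz : z ∈ Subalgebra.centralizer F S) : σ z ∈ Subalgebra.centralizer F S := by
  intro g hg
  rw [← hinv g, ← hanti, ← hanti, (Subalgebra.mem_centralizer_iff F).mp hz _ (hS g hg)]

theorem sub_map_ne_one_of_ringChar_ne_two [Nontrivial A] (hanti : ∀ x y, σ (x * y) = σ y * σ x)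
    (hinv : ∀ x, σ (σ x) = x) (hchar : ringChar F ≠ 2) (c : A) : c - σ c ≠ 1 := by
  intro hc
  have hc' : σ c - c = 1 := by simpa [hinv, map_one_of_anti hanti hinv] using congrArg σ hc
  have h2 : algebraMap F A 2 = 0 := by
    calc algebraMap F A 2 = (c - σ c) + (σ c - c) := by
          rw [hc, hc', map_ofNat, one_add_one_eq_two]
      _ = 0 := by abel
  exact Ring.two_ne_zero hchar ((algebraMap F A).injective (h2.trans (map_zero _).symm))

end Involution

theorem alt_inter_subalgebra_eq_alt_of_not_symplectic_centralizer_general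
    (F : Type) [Field F]
    (A : Type) [Ring A] [Algebra F A] [FiniteDimensional F A]
    (σ : A →ₗ[F] A)
    (hanti : ∀ x y, σ (x * y) = σ y * σ x)
    (hinv : ∀ x, σ (σ x) = x)
    (B : Subalgebra F A)
    (hBsimple : IsSimpleRing B)
    (hBcentral : Subalgebra.center F B = ⊥)
    (hσB : ∀ x, x ∈ B ↔ σ x ∈ B)
    (hchar : ringChar F ≠ 2 ∨
      ¬ ∃ c ∈ Subalgebra.centralizer F (B : Set A), c - σ c = 1) :
    ∀ x ∈ B, (∃ y : A, y - σ y = x) ↔ (∃ y ∈ B, y - σ y = x) := by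
  have : Algebra.IsCentral F B := ⟨hBcentral.le⟩
  have : IsAzumaya F B := .of_isCentral_of_isSimpleRing
  have : Nontrivial A := (Subtype.val_injective : Function.Injective ((↑) : B → A)).nontrivial
  have hnotAlt : ¬ ∃ c ∈ Subalgebra.centralizer F (B : Set A), c - σ c = 1 :=
    hchar.elim (fun h ⟨c, _, hc⟩ => sub_map_ne_one_of_ringChar_ne_two hanti hinv h c hc) id
  obtain ⟨μ, hμ1, hμσ⟩ := exists_dual_eq_one_of_not_exists_sub_eq σ
    (Subalgebra.toSubmodule (Subalgebra.centralizer F (B : Set A))) hnotAlt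
  obtain ⟨π, hπ⟩ := B.exists_linearMap_apply_mul_centralizer μ
  have hπσ : ∀ a, (π (σ a) : A) = σ (π a) := by
    refine LinearMap.congr_fun (f := B.val.toLinearMap ∘ₗ π ∘ₗ σ)
      (g := σ ∘ₗ B.val.toLinearMap ∘ₗ π)
      (B.linearMap_ext_of_apply_mul_centralizer fun b hb z hz => ?_)
    have hσz := map_mem_centralizer_of_anti hanti hinv (fun x => (hσB x).mp) hz
    have : σ (b * z) = σ b * σ z := by
      rw [hanti]; exact (hσz _ ((hσB b).mp hb)).symm
    simp [this, hπ ⟨σ b, (hσB b).mp hb⟩ hσz, hπ ⟨b, hb⟩ hz, hμσ z hz]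
  intro x hx
  refine ⟨fun ⟨y, hy⟩ => ⟨π y, (π y).2, ?_⟩, fun ⟨y, _, hy⟩ => ⟨y, hy⟩⟩
  have hπx : (π x : A) = x := by
    simpa [hμ1] using congrArg Subtype.val (hπ ⟨x, hx⟩ (one_mem _))
  calc (π y : A) - σ (π y) = π (y - σ y) := by simp [hπσ]
    _ = x := by rw [hy, hπx]

theorem alt_inter_subalgebra_eq_alt_of_not_symplectic_centralizer
    (F : Type) [Field F]
    (A : Type) [Ring A] [Algebra F A] [FiniteDimensional F A]
    [Algebra.IsCentral F A] [IsSimpleRing A]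
    (σ : A →ₗ[F] A)
    (hanti : ∀ x y, σ (x * y) = σ y * σ x)
    (hinv : ∀ x, σ (σ x) = x)
    (B : Subalgebra F A)
    (hBsimple : IsSimpleRing B)
    (hBcentral : Subalgebra.center F B = ⊥)
    (hσB : ∀ x, x ∈ B ↔ σ x ∈ B)
    (hchar : ringChar F ≠ 2 ∨
      ¬ ∃ c ∈ Subalgebra.centralizer F (B : Set A), c - σ c = 1) :
    ∀ x ∈ B, (∃ y : A, y - σ y = x) ↔ (∃ y ∈ B, y - σ y = x) :=
  alt_inter_subalgebra_eq_alt_of_not_symplectic_centralizer_general F A σ hanti hinv B hBsimple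
    hBcentral hσB hchar
end
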